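/- Let (E, ℰ) be a measurable space, let 0 < κ ≤ 1, and let g : E → ℝ be a measurable function with κ ≤ g(x) ≤ κ⁻¹ for all x. For a probability measure μ on E, define the Bayes update Lμ by (Lμ)(f) := (∫ f g dμ) / (∫ g dμ) for bounded measurable f. Then for all probability measures μ, ν on E and every measurable f : E → ℝ with sup_x |f(x)| ≤ 1, one has |(Lμ)(f) − (Lν)(f)| ≤ 2 κ⁻² · D(μ, ν), where D(μ, ν) := sup over measurable h with sup|h| ≤ 1 of |∫ h dμ − ∫ h dν|. -/

import Mathlib

/-!
Write `A = ∫ f g dμ`, `B = ∫ g dμ` and `A', B'` for the same integrals against `ν`. Then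
`A / B - A' / B' = ((A - A') + (A' / B') (B' - B)) / B` with `|A' / B'| ≤ 1` and `B ≥ κ`.
Since `κ f g` and `κ g` are bounded by `1`, both `|A - A'|` and `|B - B'|` are at most
`κ⁻¹ D(μ, ν)`, which gives `2 κ⁻² D(μ, ν)`.
-/

open MeasureTheory

/-- The total-variation-type distance between two measures:
`D(μ, ν) = sup { |∫ f dμ − ∫ f dν| : f measurable, sup |f| ≤ 1 }`. -/
noncomputable def tvDist {E : Type*} [MeasurableSpace E] (μ ν : Measure E) : ℝ :=
  sSup {r : ℝ | ∃ f : E → ℝ, Measurable f ∧ (∀ x, |f x| ≤ 1) ∧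
    r = |∫ x, f x ∂μ - ∫ x, f x ∂ν|}

theorem abs_div_sub_div_le {a b a' b' : ℝ} (hb : 0 < b) (hb' : 0 < b') (ha' : |a'| ≤ b') :
    |a / b - a' / b'| ≤ (|a - a'| + |b - b'|) / b := by
  have hsplit : a / b - a' / b' = ((a - a') + a' / b' * (b' - b)) / b := by
    field_simp
    ring
  have hratio : |a' / b'| ≤ 1 := by
    rw [abs_div, abs_of_pos hb']
    exact div_le_one_of_le₀ ha' hb'.le
  rw [hsplit, abs_div, abs_of_pos hb]
  gcongr
  calc |a - a' + a' / b' * (b' - b)| ≤ |a - a'| + |a' / b'| * |b' - b| := by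
        grw [abs_add_le, abs_mul]
    _ ≤ |a - a'| + |b - b'| := by
        rw [abs_sub_comm b' b]
        gcongr
        exact mul_le_of_le_one_left (abs_nonneg _) hratio

section TotalVariation

variable {E : Type*} [MeasurableSpace E] (μ ν : Measure E) [IsFiniteMeasure μ] [IsFiniteMeasure ν]

theorem tvDist_bddAbove :
    BddAbove {r : ℝ | ∃ f : E → ℝ, Measurable f ∧ (∀ x, |f x| ≤ 1) ∧
      r = |∫ x, f x ∂μ - ∫ x, f x ∂ν|} := by
  refine ⟨μ.real Set.univ + ν.real Set.univ, ?_⟩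
  rintro r ⟨f, -, hf, rfl⟩
  have hf' : ∀ x, ‖f x‖ ≤ 1 := hf
  have hμ := norm_integral_le_of_norm_le_const (μ := μ) (ae_of_all _ hf')
  have hν := norm_integral_le_of_norm_le_const (μ := ν) (ae_of_all _ hf')
  rw [one_mul, Real.norm_eq_abs] at hμ hν
  exact (abs_sub _ _).trans (add_le_add hμ hν)

theorem abs_integral_sub_le_mul_tvDist {f : E → ℝ} {c : ℝ} (hc : 0 < c) (hf : Measurable f)
    (hfc : ∀ x, |f x| ≤ c) :
    |∫ x, f x ∂μ - ∫ x, f x ∂ν| ≤ c * tvDist μ ν := by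
  have hnormalized : |∫ x, c⁻¹ * f x ∂μ - ∫ x, c⁻¹ * f x ∂ν| ≤ tvDist μ ν := by
    refine le_csSup (tvDist_bddAbove μ ν) ⟨fun x => c⁻¹ * f x, hf.const_mul _, fun x => ?_, rfl⟩
    rw [abs_mul, abs_inv, abs_of_pos hc]
    exact inv_mul_le_one_of_le₀ (hfc x) hc.le
  rw [integral_const_mul, integral_const_mul, ← mul_sub, abs_mul, abs_inv, abs_of_pos hc,
    inv_mul_le_iff₀ hc] at hnormalized
  exact hnormalized

end TotalVariation

theorem bayes_update_lipschitz_general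
    {E : Type*} [MeasurableSpace E]
    (κ : ℝ) (hκ0 : 0 < κ)
    (g : E → ℝ) (hg : Measurable g) (hgl : ∀ x, κ ≤ g x) (hgu : ∀ x, g x ≤ κ⁻¹)
    (μ ν : Measure E) [IsProbabilityMeasure μ] [IsProbabilityMeasure ν]
    (f : E → ℝ) (hf : Measurable f) (hfb : ∀ x, |f x| ≤ 1) :
    |(∫ x, f x * g x ∂μ) / (∫ x, g x ∂μ) - (∫ x, f x * g x ∂ν) / (∫ x, g x ∂ν)| ≤
      2 * κ⁻¹ ^ 2 * tvDist μ ν := by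
  have hg_pos : ∀ x, 0 < g x := fun x => hκ0.trans_le (hgl x)
  have habs_g : ∀ x, |g x| = g x := fun x => abs_of_pos (hg_pos x)
  have hbound_g : ∀ x, |g x| ≤ κ⁻¹ := fun x => (habs_g x).trans_le (hgu x)
  have hbound_fg : ∀ x, |f x * g x| ≤ κ⁻¹ := fun x => by
    rw [abs_mul]
    exact (mul_le_of_le_one_left (abs_nonneg _) (hfb x)).trans (hbound_g x)
  have hint : ∀ (m : Measure E) [IsProbabilityMeasure m], Integrable g m := fun m _ =>
    .of_bound hg.aestronglyMeasurable κ⁻¹ (ae_of_all _ hbound_g)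
  have hκ_le : ∀ (m : Measure E) [IsProbabilityMeasure m], κ ≤ ∫ x, g x ∂m := fun m _ => by
    simpa using integral_mono (integrable_const κ) (hint m) hgl
  have hnum_ν : |∫ x, f x * g x ∂ν| ≤ ∫ x, g x ∂ν := by
    refine norm_integral_le_of_norm_le (f := fun x => f x * g x) (hint ν)
      (ae_of_all _ fun x => ?_)
    rw [Real.norm_eq_abs, abs_mul, habs_g]
    exact mul_le_of_le_one_left (hg_pos x).le (hfb x)
  have hnum : |∫ x, f x * g x ∂μ - ∫ x, f x * g x ∂ν| ≤ κ⁻¹ * tvDist μ ν :=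
    abs_integral_sub_le_mul_tvDist μ ν (inv_pos.2 hκ0) (hf.mul hg) hbound_fg
  have hden := abs_integral_sub_le_mul_tvDist μ ν (inv_pos.2 hκ0) hg hbound_g
  calc _ ≤ (|∫ x, f x * g x ∂μ - ∫ x, f x * g x ∂ν| + |∫ x, g x ∂μ - ∫ x, g x ∂ν|) / κ :=
        (abs_div_sub_div_le (hκ0.trans_le (hκ_le μ)) (hκ0.trans_le (hκ_le ν)) hnum_ν).trans
          (div_le_div_of_nonneg_left (by positivity) hκ0 (hκ_le μ))
    _ ≤ (κ⁻¹ * tvDist μ ν + κ⁻¹ * tvDist μ ν) / κ := by gcongr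
    _ = 2 * κ⁻¹ ^ 2 * tvDist μ ν := by ring

/-- Lipschitz bound for the Bayesian update step of the particle filter: if the likelihood `g`
satisfies `κ ≤ g ≤ κ⁻¹` with `0 < κ ≤ 1`, then for every measurable `f` bounded by `1`,
`|(Lμ)(f) − (Lν)(f)| ≤ 2 κ⁻² D(μ, ν)`, where `(Lμ)(f) = (∫ f g dμ) / (∫ g dμ)`. -/
theorem bayes_update_lipschitz
    {E : Type*} [MeasurableSpace E]
    (κ : ℝ) (hκ0 : 0 < κ) (hκ1 : κ ≤ 1)
    (g : E → ℝ) (hg : Measurable g) (hgl : ∀ x, κ ≤ g x) (hgu : ∀ x, g x ≤ κ⁻¹)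
    (μ ν : Measure E) [IsProbabilityMeasure μ] [IsProbabilityMeasure ν]
    (f : E → ℝ) (hf : Measurable f) (hfb : ∀ x, |f x| ≤ 1) :
    |(∫ x, f x * g x ∂μ) / (∫ x, g x ∂μ) - (∫ x, f x * g x ∂ν) / (∫ x, g x ∂ν)| ≤
      2 * κ⁻¹ ^ 2 * tvDist μ ν :=
  bayes_update_lipschitz_general κ hκ0 g hg hgl hgu μ ν f hf hfb
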